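/- arXiv:2111.09396 — 2 statements merged into one kernel-verified Lean document; each statement's English description precedes it below -/
import Mathlib

section
/- Let Q ∈ ℝ^{n×n} be symmetric positive definite, A ∈ ℝ^{n×n}, B ∈ ℝ^{n×m}, R ∈ ℝ^{m×m} symmetric positive definite, ū ∈ ℝ^m, Ξ ∈ ℝ^{n×n} symmetric positive semidefinite, and ξ̄ ∈ ℝ^n. Suppose there exist scalars α, β, λ ≥ 0 such that −E − αF − βS − λT ⪰ 0, where E = [[AᵀQ+QA, 0, QB],[0, 0, 0],[BᵀQ, 0, 0]], F = [[Q, 0, 0],[0, −1, 0],[0, 0, 0]], S = [[0, 0, 0],[0, 1−ūᵀRū, ūᵀR],[0, Rū, −R]], and T = [[−Ξ, Ξξ̄, 0],[ξ̄ᵀΞ, 1−ξ̄ᵀΞξ̄, 0],[0, 0, 0]]. Then for every ζ ∈ ℝ^n and u ∈ ℝ^m satisfying ζᵀQζ ≥ 1, (u−ū)ᵀR(u−ū) ≤ 1, and (ζ−ξ̄)ᵀΞ(ζ−ξ̄) ≤ 1, one has 2ζᵀQ(Aζ + Bu) ≤ 0. -/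
open Matrix

/-- 3×3 block matrix. -/
def blk3 {α β γ : Type*} (M11 : Matrix α α ℝ) (M12 : Matrix α β ℝ) (M13 : Matrix α γ ℝ)
    (M21 : Matrix β α ℝ) (M22 : Matrix β β ℝ) (M23 : Matrix β γ ℝ)
    (M31 : Matrix γ α ℝ) (M32 : Matrix γ β ℝ) (M33 : Matrix γ γ ℝ) :
    Matrix (α ⊕ (β ⊕ γ)) (α ⊕ (β ⊕ γ)) ℝ :=
  Matrix.fromBlocks M11 (Matrix.of fun i j => Sum.elim (M12 i) (M13 i) j)
    (Matrix.of fun i j => Sum.elim (fun b => M21 b j) (fun c => M31 c j) i)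
    (Matrix.fromBlocks M22 M23 M32 M33)

/-- 1×1 matrix with entry `c`. -/
def sc (c : ℝ) : Matrix (Fin 1) (Fin 1) ℝ := Matrix.of fun _ _ => c

/-- column matrix of a vector. -/
def colV {α : Type*} (v : α → ℝ) : Matrix α (Fin 1) ℝ := Matrix.of fun i _ => v i

/-- row matrix of a vector. -/
def rowV {α : Type*} (v : α → ℝ) : Matrix (Fin 1) α ℝ := Matrix.of fun _ j => v j

/-! Evaluating the quadratic form of the LMI matrix at the homogenised vector `(ζ, 1, u)` gives
`-V̇ - α (V - 1) - β (1 - ‖u - ū‖²_R) - λ (1 - ‖ζ - ξ̄‖²_Ξ)`, where `V = ζᵀQζ` and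
`V̇ = 2ζᵀQ(Aζ + Bu)`. This is nonnegative by the LMI, and on the region in question the last three
terms are nonpositive, which forces `V̇ ≤ 0`. -/

section BlockQuadraticForms

variable {α β γ : Type*} [Fintype α] [Fintype β] [Fintype γ]

theorem dotProduct_blk3_mulVec
    (M11 : Matrix α α ℝ) (M12 : Matrix α β ℝ) (M13 : Matrix α γ ℝ)
    (M21 : Matrix β α ℝ) (M22 : Matrix β β ℝ) (M23 : Matrix β γ ℝ)
    (M31 : Matrix γ α ℝ) (M32 : Matrix γ β ℝ) (M33 : Matrix γ γ ℝ)
    (x : α → ℝ) (y : β → ℝ) (w : γ → ℝ) :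
    Sum.elim x (Sum.elim y w) ⬝ᵥ
      (blk3 M11 M12 M13 M21 M22 M23 M31 M32 M33 *ᵥ Sum.elim x (Sum.elim y w)) =
    x ⬝ᵥ (M11 *ᵥ x) + x ⬝ᵥ (M12 *ᵥ y) + x ⬝ᵥ (M13 *ᵥ w)
      + y ⬝ᵥ (M21 *ᵥ x) + y ⬝ᵥ (M22 *ᵥ y) + y ⬝ᵥ (M23 *ᵥ w)
      + w ⬝ᵥ (M31 *ᵥ x) + w ⬝ᵥ (M32 *ᵥ y) + w ⬝ᵥ (M33 *ᵥ w) := by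
  simp only [blk3, Matrix.fromBlocks, dotProduct, mulVec, Fintype.sum_sum_type, Sum.elim_inl,
    Sum.elim_inr, of_apply, Finset.mul_sum, mul_add, Finset.sum_add_distrib]
  ring

@[simp] theorem dotProduct_sc_mulVec (c : ℝ) (y y' : Fin 1 → ℝ) :
    y ⬝ᵥ (sc c *ᵥ y') = c * y 0 * y' 0 := by
  simp only [sc, mulVec, dotProduct, of_apply, Finset.univ_unique, Fin.default_eq_zero,
    Finset.sum_singleton]
  ring

@[simp] theorem dotProduct_colV_mulVec (x v : α → ℝ) (y : Fin 1 → ℝ) :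
    x ⬝ᵥ (colV v *ᵥ y) = y 0 * (x ⬝ᵥ v) := by
  simp only [colV, mulVec, dotProduct, of_apply, Finset.univ_unique, Fin.default_eq_zero,
    Finset.sum_singleton, Finset.mul_sum]
  exact Finset.sum_congr rfl fun _ _ => by ring

@[simp] theorem dotProduct_rowV_mulVec (y : Fin 1 → ℝ) (v w : α → ℝ) :
    y ⬝ᵥ (rowV v *ᵥ w) = y 0 * (v ⬝ᵥ w) := by
  simp [rowV, mulVec, dotProduct]

theorem one_sub_dotProduct_mulVec_sub (M : Matrix α α ℝ) (x c : α → ℝ) :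
    1 - (x - c) ⬝ᵥ (M *ᵥ (x - c)) =
      (1 - c ⬝ᵥ (M *ᵥ c)) + (c ᵥ* M) ⬝ᵥ x + x ⬝ᵥ (M *ᵥ c) - x ⬝ᵥ (M *ᵥ x) := by
  simp only [mulVec_sub, dotProduct_sub, sub_dotProduct, ← dotProduct_mulVec]
  ring

theorem dotProduct_transpose_mul_mulVec {Q : Matrix α α ℝ} (hQ : Q.IsSymm) (M : Matrix α γ ℝ)
    (x : γ → ℝ) (y : α → ℝ) :
    x ⬝ᵥ ((Mᵀ * Q) *ᵥ y) = y ⬝ᵥ (Q *ᵥ (M *ᵥ x)) := by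
  rw [← mulVec_mulVec, dotProduct_mulVec, vecMul_transpose, dotProduct_mulVec, ← mulVec_transpose,
    hQ.eq, dotProduct_comm]

end BlockQuadraticForms

section LiftedQuadraticForms

variable {α γ : Type*} [Fintype α] [Fintype γ] (ζ : α → ℝ) (u : γ → ℝ)

theorem dotProduct_lyapunov_blk3_mulVec {Q : Matrix α α ℝ} (hQ : Q.IsSymm) (A : Matrix α α ℝ)
    (B : Matrix α γ ℝ) :
    Sum.elim ζ (Sum.elim (1 : Fin 1 → ℝ) u) ⬝ᵥ
      (blk3 (Aᵀ * Q + Q * A) 0 (Q * B) 0 0 0 (Bᵀ * Q) 0 0 *ᵥ Sum.elim ζ (Sum.elim 1 u)) =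
    2 * (ζ ⬝ᵥ (Q *ᵥ (A *ᵥ ζ + B *ᵥ u))) := by
  rw [dotProduct_blk3_mulVec, add_mulVec, dotProduct_add, dotProduct_transpose_mul_mulVec hQ,
    dotProduct_transpose_mul_mulVec hQ, ← mulVec_mulVec, ← mulVec_mulVec, mulVec_add,
    dotProduct_add]
  simp only [zero_mulVec, dotProduct_zero]
  ring

theorem dotProduct_level_blk3_mulVec (Q : Matrix α α ℝ) :
    Sum.elim ζ (Sum.elim (1 : Fin 1 → ℝ) u) ⬝ᵥ
      (blk3 Q 0 0 0 (sc (-1)) 0 0 0 (0 : Matrix γ γ ℝ) *ᵥ Sum.elim ζ (Sum.elim 1 u)) =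
    ζ ⬝ᵥ (Q *ᵥ ζ) - 1 := by
  rw [dotProduct_blk3_mulVec]
  simp only [zero_mulVec, dotProduct_zero, add_zero, dotProduct_sc_mulVec, Pi.one_apply, mul_one]
  ring

theorem dotProduct_input_blk3_mulVec (R : Matrix γ γ ℝ) (ubar : γ → ℝ) :
    Sum.elim ζ (Sum.elim 1 u) ⬝ᵥ
      (blk3 (0 : Matrix α α ℝ) 0 0
        0 (sc (1 - ubar ⬝ᵥ (R *ᵥ ubar))) (rowV (ubar ᵥ* R))
        0 (colV (R *ᵥ ubar)) (-R) *ᵥ Sum.elim ζ (Sum.elim 1 u)) =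
    1 - (u - ubar) ⬝ᵥ (R *ᵥ (u - ubar)) := by
  rw [dotProduct_blk3_mulVec, one_sub_dotProduct_mulVec_sub]
  simp only [zero_mulVec, dotProduct_zero, add_zero, zero_add, dotProduct_sc_mulVec,
    dotProduct_rowV_mulVec, dotProduct_colV_mulVec, neg_mulVec, dotProduct_neg, Pi.one_apply,
    one_mul, mul_one]
  ring

theorem dotProduct_state_blk3_mulVec (Ξ : Matrix α α ℝ) (ξbar : α → ℝ) :
    Sum.elim ζ (Sum.elim 1 u) ⬝ᵥ
      (blk3 (-Ξ) (colV (Ξ *ᵥ ξbar)) 0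
        (rowV (ξbar ᵥ* Ξ)) (sc (1 - ξbar ⬝ᵥ (Ξ *ᵥ ξbar))) 0
        0 0 (0 : Matrix γ γ ℝ) *ᵥ Sum.elim ζ (Sum.elim 1 u)) =
    1 - (ζ - ξbar) ⬝ᵥ (Ξ *ᵥ (ζ - ξbar)) := by
  rw [dotProduct_blk3_mulVec, one_sub_dotProduct_mulVec_sub]
  simp only [zero_mulVec, dotProduct_zero, add_zero, dotProduct_sc_mulVec,
    dotProduct_rowV_mulVec, dotProduct_colV_mulVec, neg_mulVec, dotProduct_neg, Pi.one_apply,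
    one_mul, mul_one]
  ring

end LiftedQuadraticForms

theorem s_procedure_pointwise_general {n m : ℕ}
    (Q A : Matrix (Fin n) (Fin n) ℝ) (B : Matrix (Fin n) (Fin m) ℝ)
    (R : Matrix (Fin m) (Fin m) ℝ) (ubar : Fin m → ℝ)
    (Ξ : Matrix (Fin n) (Fin n) ℝ) (ξbar : Fin n → ℝ)
    (hQ : Q.PosDef)
    (E F S T : Matrix ((Fin n) ⊕ ((Fin 1) ⊕ (Fin m))) ((Fin n) ⊕ ((Fin 1) ⊕ (Fin m))) ℝ)
    (hE : E = blk3 (Aᵀ * Q + Q * A) 0 (Q * B)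
                   0 0 0
                   (Bᵀ * Q) 0 0)
    (hF : F = blk3 Q 0 0
                   0 (sc (-1)) 0
                   0 0 0)
    (hS : S = blk3 0 0 0
                   0 (sc (1 - ubar ⬝ᵥ (R *ᵥ ubar))) (rowV (ubar ᵥ* R))
                   0 (colV (R *ᵥ ubar)) (-R))
    (hT : T = blk3 (-Ξ) (colV (Ξ *ᵥ ξbar)) 0
                   (rowV (ξbar ᵥ* Ξ)) (sc (1 - ξbar ⬝ᵥ (Ξ *ᵥ ξbar))) 0
                   0 0 0)
    (α β lam : ℝ) (hα : 0 ≤ α) (hβ : 0 ≤ β) (hlam : 0 ≤ lam)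
    (hLMI : (-E - α • F - β • S - lam • T).PosSemidef) :
    ∀ (ζ : Fin n → ℝ) (u : Fin m → ℝ),
      1 ≤ ζ ⬝ᵥ (Q *ᵥ ζ) →
      (u - ubar) ⬝ᵥ (R *ᵥ (u - ubar)) ≤ 1 →
      (ζ - ξbar) ⬝ᵥ (Ξ *ᵥ (ζ - ξbar)) ≤ 1 →
      2 * (ζ ⬝ᵥ (Q *ᵥ (A *ᵥ ζ + B *ᵥ u))) ≤ 0 := by
  intro ζ u hV hu hξ
  set z := Sum.elim ζ (Sum.elim (1 : Fin 1 → ℝ) u)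
  have hLMI_z : 0 ≤ -(z ⬝ᵥ (E *ᵥ z)) - α * (z ⬝ᵥ (F *ᵥ z)) - β * (z ⬝ᵥ (S *ᵥ z))
      - lam * (z ⬝ᵥ (T *ᵥ z)) := by
    simpa only [star_trivial, sub_mulVec, neg_mulVec, smul_mulVec, dotProduct_sub, dotProduct_neg,
      dotProduct_smul, smul_eq_mul] using hLMI.dotProduct_mulVec_nonneg z
  rw [hE, hF, hS, hT, dotProduct_lyapunov_blk3_mulVec ζ u (isHermitian_iff_isSymm.mp hQ.isHermitian),
    dotProduct_level_blk3_mulVec, dotProduct_input_blk3_mulVec,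
    dotProduct_state_blk3_mulVec] at hLMI_z
  have hF_nonneg : 0 ≤ α * (ζ ⬝ᵥ (Q *ᵥ ζ) - 1) := mul_nonneg hα (by linarith)
  have hS_nonneg : 0 ≤ β * (1 - (u - ubar) ⬝ᵥ (R *ᵥ (u - ubar))) := mul_nonneg hβ (by linarith)
  have hT_nonneg : 0 ≤ lam * (1 - (ζ - ξbar) ⬝ᵥ (Ξ *ᵥ (ζ - ξbar))) := mul_nonneg hlam (by linarith)
  linarith

/-- Pointwise S-procedure consequence in the proof of Lemma 1. -/
theorem s_procedure_pointwise {n m : ℕ}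
    (Q A : Matrix (Fin n) (Fin n) ℝ) (B : Matrix (Fin n) (Fin m) ℝ)
    (R : Matrix (Fin m) (Fin m) ℝ) (ubar : Fin m → ℝ)
    (Ξ : Matrix (Fin n) (Fin n) ℝ) (ξbar : Fin n → ℝ)
    (hQ : Q.PosDef) (hR : R.PosDef) (hΞ : Ξ.PosSemidef)
    (E F S T : Matrix ((Fin n) ⊕ ((Fin 1) ⊕ (Fin m))) ((Fin n) ⊕ ((Fin 1) ⊕ (Fin m))) ℝ)
    (hE : E = blk3 (Aᵀ * Q + Q * A) 0 (Q * B)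
                   0 0 0
                   (Bᵀ * Q) 0 0)
    (hF : F = blk3 Q 0 0
                   0 (sc (-1)) 0
                   0 0 0)
    (hS : S = blk3 0 0 0
                   0 (sc (1 - ubar ⬝ᵥ (R *ᵥ ubar))) (rowV (ubar ᵥ* R))
                   0 (colV (R *ᵥ ubar)) (-R))
    (hT : T = blk3 (-Ξ) (colV (Ξ *ᵥ ξbar)) 0
                   (rowV (ξbar ᵥ* Ξ)) (sc (1 - ξbar ⬝ᵥ (Ξ *ᵥ ξbar))) 0
                   0 0 0)
    (α β lam : ℝ) (hα : 0 ≤ α) (hβ : 0 ≤ β) (hlam : 0 ≤ lam)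
    (hLMI : (-E - α • F - β • S - lam • T).PosSemidef) :
    ∀ (ζ : Fin n → ℝ) (u : Fin m → ℝ),
      1 ≤ ζ ⬝ᵥ (Q *ᵥ ζ) →
      (u - ubar) ⬝ᵥ (R *ᵥ (u - ubar)) ≤ 1 →
      (ζ - ξbar) ⬝ᵥ (Ξ *ᵥ (ζ - ξbar)) ≤ 1 →
      2 * (ζ ⬝ᵥ (Q *ᵥ (A *ᵥ ζ + B *ᵥ u))) ≤ 0 :=
  s_procedure_pointwise_general Q A B R ubar Ξ ξbar hQ E F S T hE hF hS hT α β lam hα hβ hlam hLMI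
end

section
/- Let p, m ≥ 1. Let Q = [[Y, N],[Nᵀ, Ỹ]] ∈ ℝ^{2p×2p} be symmetric positive definite with inverse Q⁻¹ = [[X, M],[Mᵀ, X̃]] (all blocks p×p) and M invertible, and set Π₁ = [[X, I_p],[Mᵀ, 0]]. Let A ∈ ℝ^{2p×2p} and B ∈ ℝ^{2p×m} be arbitrary, let R ∈ ℝ^{m×m} be symmetric positive definite with ū ∈ ℝ^m, let Ξ_p ∈ ℝ^{p×p} be symmetric positive definite with ξ̄_p ∈ ℝ^p, and set Ξ = [[Ξ_p, 0],[0, 0]] ∈ ℝ^{2p×2p}, ξ̄ = (ξ̄_p, 0). Define E = [[AᵀQ+QA, 0, QB],[0, 0, 0],[BᵀQ, 0, 0]], F = [[Q, 0, 0],[0, −1, 0],[0, 0, 0]], S = [[0, 0, 0],[0, 1−ūᵀRū, ūᵀR],[0, Rū, −R]], T = [[−Ξ, Ξξ̄, 0],[ξ̄ᵀΞ, 1−ξ̄ᵀΞξ̄, 0],[0, 0, 0]], and the transformed matrices E′ = [[Π₁ᵀ(AᵀQ+QA)Π₁, 0, Π₁ᵀQB],[0, 0, 0],[BᵀQΠ₁,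 0, 0]], F′ = [[Π₁ᵀQΠ₁, 0, 0],[0, −1, 0],[0, 0, 0]], S′ = S, T′ = [[−𝒢, Π₁ᵀΞξ̄, 0],[ξ̄ᵀΞΠ₁, 1−ξ̄ᵀΞξ̄, 0],[0, 0, 0]] with 𝒢 = [[2X − Ξ_p⁻¹, XΞ_p],[Ξ_pX, Ξ_p]]. If α, β, λ ≥ 0 and −E′ − αF′ − βS′ − λT′ ⪰ 0, then −E − αF − βS − λT ⪰ 0. -/
open Matrix

/-!
Let `W = diag(Π₁, I)`. The congruence `Wᵀ (·) W` sends `E`, `F`, `S` to `E'`, `F'`, `S`, and `T`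
to `T' - Δ` with `Δ = diag(Π₁ᵀΞΠ₁ - 𝒢, 0, 0)`. Completing the square,
`XΞ_pX - (2X - Ξ_p⁻¹) = (X - Ξ_p⁻¹) Ξ_p (X - Ξ_p⁻¹) ⪰ 0` (`X` is symmetric as a block of `Q⁻¹`),
so `Δ ⪰ 0` and `Wᵀ (-E - αF - βS - λT) W = (-E' - αF' - βS - λT') + λΔ ⪰ 0`.
Since `M` is invertible, so are `Π₁` and `W`, and congruence by an invertible matrix reflects
semidefiniteness.
-/

open scoped MatrixOrder ComplexOrder

namespace Matrix

variable {n τ : Type*} [Fintype n] [DecidableEq n]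

lemma PosSemidef.fromBlocks_zero_zero_zero {𝕜 : Type*} [RCLike 𝕜] [Fintype τ]
    {D : Matrix n n 𝕜} (hD : D.PosSemidef) :
    (fromBlocks D 0 0 (0 : Matrix τ τ 𝕜)).PosSemidef := by
  convert hD.conjTranspose_mul_mul_same (fromCols 1 0 : Matrix n (n ⊕ τ) 𝕜) using 1
  ext (i | i) (j | j) <;> simp [conjTranspose_fromCols_eq_fromRows_conjTranspose, fromRows_mul]

lemma PosDef.two_smul_sub_inv_le_mul_mul {𝕜 : Type*} [RCLike 𝕜] {Ξ X : Matrix n n 𝕜}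
    (hΞ : Ξ.PosDef) (hX : X.IsHermitian) : (2 : 𝕜) • X - Ξ⁻¹ ≤ X * Ξ * X := by
  have := hΞ.isUnit.invertible
  have hsq : X * Ξ * X - ((2 : 𝕜) • X - Ξ⁻¹) = (X - Ξ⁻¹)ᴴ * Ξ * (X - Ξ⁻¹) := by
    rw [conjTranspose_sub, hX.eq, hΞ.inv.isHermitian.eq]
    simp only [sub_mul, mul_sub, mul_assoc, mul_inv_of_invertible, inv_mul_of_invertible,
      mul_one, one_mul, two_smul]
    abel
  rw [le_iff, hsq]
  exact hΞ.posSemidef.conjTranspose_mul_mul_same _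

lemma isUnit_fromBlocks_one_zero {R : Type*} [CommRing R] {X C : Matrix n n R} (hC : IsUnit C) :
    IsUnit (fromBlocks X (1 : Matrix n n R) C 0) := by
  have := hC.invertible
  refine IsUnit.of_mul_eq_one (fromBlocks 0 (⅟C) (1 : Matrix n n R) (-(X * ⅟C))) ?_
  simp [fromBlocks_multiply, fromBlocks_one]

lemma fromBlocks_le_transpose_fromBlocks_mul_mul {Ξ X : Matrix n n ℝ} (C : Matrix n n ℝ)
    (hΞ : Ξ.PosDef) (hX : X.IsHermitian) :
    fromBlocks ((2 : ℝ) • X - Ξ⁻¹) (X * Ξ) (Ξ * X) Ξ ≤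
      (fromBlocks X 1 C 0)ᵀ * fromBlocks Ξ 0 0 0 * fromBlocks X 1 C 0 := by
  have hXT : Xᵀ = X := (isHermitian_iff_isSymm.mp hX).eq
  rw [le_iff, fromBlocks_transpose, fromBlocks_multiply, fromBlocks_multiply]
  simp only [hXT, transpose_one, transpose_zero, mul_zero, zero_mul, add_zero, mul_one, one_mul]
  rw [sub_eq_add_neg, fromBlocks_neg, fromBlocks_add, ← sub_eq_add_neg]
  simp only [add_neg_cancel]
  exact (le_iff.mp (hΞ.two_smul_sub_inv_le_mul_mul hX)).fromBlocks_zero_zero_zero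

end Matrix

section Blk3

variable {α β γ : Type*}

lemma blk3_eq_fromBlocks (M11 : Matrix α α ℝ) (M12 : Matrix α β ℝ) (M13 : Matrix α γ ℝ)
    (M21 : Matrix β α ℝ) (M22 : Matrix β β ℝ) (M23 : Matrix β γ ℝ)
    (M31 : Matrix γ α ℝ) (M32 : Matrix γ β ℝ) (M33 : Matrix γ γ ℝ) :
    blk3 M11 M12 M13 M21 M22 M23 M31 M32 M33 =
      fromBlocks M11 (fromCols M12 M13) (fromRows M21 M31) (fromBlocks M22 M23 M32 M33) := by
  ext (i | i | i) (j | j | j) <;> rfl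

lemma blk3_add (A11 B11 : Matrix α α ℝ) (A12 B12 : Matrix α β ℝ) (A13 B13 : Matrix α γ ℝ)
    (A21 B21 : Matrix β α ℝ) (A22 B22 : Matrix β β ℝ) (A23 B23 : Matrix β γ ℝ)
    (A31 B31 : Matrix γ α ℝ) (A32 B32 : Matrix γ β ℝ) (A33 B33 : Matrix γ γ ℝ) :
    blk3 A11 A12 A13 A21 A22 A23 A31 A32 A33 + blk3 B11 B12 B13 B21 B22 B23 B31 B32 B33 =
      blk3 (A11 + B11) (A12 + B12) (A13 + B13) (A21 + B21) (A22 + B22) (A23 + B23)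
        (A31 + B31) (A32 + B32) (A33 + B33) := by
  ext (i | i | i) (j | j | j) <;> rfl

lemma blk3_zero_zero (D : Matrix α α ℝ) :
    blk3 D 0 0 0 0 0 0 0 (0 : Matrix γ γ ℝ) = fromBlocks D 0 0 (0 : Matrix (β ⊕ γ) _ ℝ) := by
  rw [blk3_eq_fromBlocks, fromCols_zero, fromRows_zero, fromBlocks_zero]

lemma transpose_fromBlocks_one_mul_blk3_mul [Fintype α] [Fintype β] [Fintype γ]
    [DecidableEq β] [DecidableEq γ] (P : Matrix α α ℝ)
    (M11 : Matrix α α ℝ) (M12 : Matrix α β ℝ) (M13 : Matrix α γ ℝ)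
    (M21 : Matrix β α ℝ) (M22 : Matrix β β ℝ) (M23 : Matrix β γ ℝ)
    (M31 : Matrix γ α ℝ) (M32 : Matrix γ β ℝ) (M33 : Matrix γ γ ℝ) :
    (fromBlocks P 0 0 (1 : Matrix (β ⊕ γ) (β ⊕ γ) ℝ))ᵀ *
        blk3 M11 M12 M13 M21 M22 M23 M31 M32 M33 * fromBlocks P 0 0 1 =
      blk3 (Pᵀ * M11 * P) (Pᵀ * M12) (Pᵀ * M13) (M21 * P) M22 M23 (M31 * P) M32 M33 := by
  simp [blk3_eq_fromBlocks, fromBlocks_transpose, fromBlocks_multiply, mul_fromCols, fromRows_mul]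

lemma mul_colV [Fintype α] (L : Matrix β α ℝ) (v : α → ℝ) : L * colV v = colV (L *ᵥ v) := by
  ext i j; simp [colV, mul_apply, mulVec, dotProduct]

lemma rowV_mul [Fintype α] (v : α → ℝ) (L : Matrix α β ℝ) : rowV v * L = rowV (v ᵥ* L) := by
  ext i j; simp [rowV, mul_apply, vecMul, dotProduct]

end Blk3

theorem primed_LMI_implies_original_general {p m : ℕ}
    (X M Xtilde : Matrix (Fin p) (Fin p) ℝ)
    (Q : Matrix ((Fin p) ⊕ (Fin p)) ((Fin p) ⊕ (Fin p)) ℝ)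
    (hQpd : Q.PosDef)
    (hQinv : Q⁻¹ = Matrix.fromBlocks X M Mᵀ Xtilde)
    (hM : IsUnit M)
    (Pi1 : Matrix ((Fin p) ⊕ (Fin p)) ((Fin p) ⊕ (Fin p)) ℝ)
    (hPi1 : Pi1 = Matrix.fromBlocks X 1 Mᵀ 0)
    (A : Matrix ((Fin p) ⊕ (Fin p)) ((Fin p) ⊕ (Fin p)) ℝ)
    (B : Matrix ((Fin p) ⊕ (Fin p)) (Fin m) ℝ)
    (R : Matrix (Fin m) (Fin m) ℝ) (ubar : Fin m → ℝ)
    (Ξp : Matrix (Fin p) (Fin p) ℝ) (hΞp : Ξp.PosDef)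
    (Ξ : Matrix ((Fin p) ⊕ (Fin p)) ((Fin p) ⊕ (Fin p)) ℝ)
    (hΞ : Ξ = Matrix.fromBlocks Ξp 0 0 0)
    (ξbar : ((Fin p) ⊕ (Fin p)) → ℝ)
    (G : Matrix ((Fin p) ⊕ (Fin p)) ((Fin p) ⊕ (Fin p)) ℝ)
    (hG : G = Matrix.fromBlocks ((2 : ℝ) • X - Ξp⁻¹) (X * Ξp) (Ξp * X) Ξp)
    (E F S T E' F' T' : Matrix (((Fin p) ⊕ (Fin p)) ⊕ ((Fin 1) ⊕ (Fin m)))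
        (((Fin p) ⊕ (Fin p)) ⊕ ((Fin 1) ⊕ (Fin m))) ℝ)
    (hE : E = blk3 (Aᵀ * Q + Q * A) 0 (Q * B)
                   0 0 0
                   (Bᵀ * Q) 0 0)
    (hF : F = blk3 Q 0 0
                   0 (sc (-1)) 0
                   0 0 0)
    (hS : S = blk3 0 0 0
                   0 (sc (1 - ubar ⬝ᵥ (R *ᵥ ubar))) (rowV (ubar ᵥ* R))
                   0 (colV (R *ᵥ ubar)) (-R))
    (hT : T = blk3 (-Ξ) (colV (Ξ *ᵥ ξbar)) 0
                   (rowV (ξbar ᵥ* Ξ)) (sc (1 - ξbar ⬝ᵥ (Ξ *ᵥ ξbar))) 0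
                   0 0 0)
    (hE' : E' = blk3 (Pi1ᵀ * (Aᵀ * Q + Q * A) * Pi1) 0 (Pi1ᵀ * (Q * B))
                     0 0 0
                     (Bᵀ * Q * Pi1) 0 0)
    (hF' : F' = blk3 (Pi1ᵀ * Q * Pi1) 0 0
                     0 (sc (-1)) 0
                     0 0 0)
    (hT' : T' = blk3 (-G) (colV (Pi1ᵀ *ᵥ (Ξ *ᵥ ξbar))) 0
                     (rowV ((ξbar ᵥ* Ξ) ᵥ* Pi1)) (sc (1 - ξbar ⬝ᵥ (Ξ *ᵥ ξbar))) 0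
                     0 0 0)
    (α β lam : ℝ) (hlam : 0 ≤ lam)
    (hLMI' : (-E' - α • F' - β • S - lam • T').PosSemidef) :
    (-E - α • F - β • S - lam • T).PosSemidef := by
  have hX : X.IsHermitian := (isHermitian_fromBlocks_iff.mp (hQinv ▸ hQpd.inv.isHermitian)).1
  set W := fromBlocks Pi1 0 0 (1 : Matrix (Fin 1 ⊕ Fin m) (Fin 1 ⊕ Fin m) ℝ)
  set Δ := blk3 (Pi1ᵀ * Ξ * Pi1 - G) (0 : Matrix _ (Fin 1) ℝ) 0 0 0 0 0 0
    (0 : Matrix (Fin m) (Fin m) ℝ) with hΔ_def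
  have hΔ : Δ.PosSemidef := by
    rw [hΔ_def, blk3_zero_zero]
    refine PosSemidef.fromBlocks_zero_zero_zero (le_iff.mp ?_)
    rw [hPi1, hΞ, hG]
    exact fromBlocks_le_transpose_fromBlocks_mul_mul _ hΞp hX
  have hWE : Wᵀ * E * W = E' := by
    rw [hE, hE', transpose_fromBlocks_one_mul_blk3_mul]; simp [mul_assoc]
  have hWF : Wᵀ * F * W = F' := by
    rw [hF, hF', transpose_fromBlocks_one_mul_blk3_mul]; simp
  have hWS : Wᵀ * S * W = S := by
    rw [hS, transpose_fromBlocks_one_mul_blk3_mul]; simp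
  have hWT : Wᵀ * T * W + Δ = T' := by
    rw [hT, hT', transpose_fromBlocks_one_mul_blk3_mul, blk3_add]
    simp only [mul_colV, rowV_mul, Matrix.mul_neg, Matrix.neg_mul, Matrix.mul_zero,
      Matrix.zero_mul, add_zero]
    congr 1
    abel
  have hPi1_unit : IsUnit Pi1 := hPi1 ▸ isUnit_fromBlocks_one_zero (M.isUnit_transpose.mpr hM)
  have hW : IsUnit W := isUnit_fromBlocks_zero₂₁.mpr ⟨hPi1_unit, isUnit_one⟩
  rw [← hW.posSemidef_star_left_conjugate_iff]
  have hconj : star W * (-E - α • F - β • S - lam • T) * W =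
      (-E' - α • F' - β • S - lam • T') + lam • Δ := by
    simp only [star_eq_conjTranspose, conjTranspose_eq_transpose_of_trivial, Matrix.mul_sub,
      Matrix.sub_mul, Matrix.mul_neg, Matrix.neg_mul, Matrix.mul_smul, Matrix.smul_mul]
    rw [hWE, hWF, hWS, ← hWT]
    module
  rw [hconj]
  exact hLMI'.add (hΔ.smul hlam)

/-- Bridging claim in the proof of Theorem 1: the primed LMI in the linearized variables
implies the original invariance LMI of Lemma 1. -/
theorem primed_LMI_implies_original {p m : ℕ} (hp : 1 ≤ p) (hm : 1 ≤ m)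
    (Y N Ytilde X M Xtilde : Matrix (Fin p) (Fin p) ℝ)
    (Q : Matrix ((Fin p) ⊕ (Fin p)) ((Fin p) ⊕ (Fin p)) ℝ)
    (hQ : Q = Matrix.fromBlocks Y N Nᵀ Ytilde)
    (hQpd : Q.PosDef)
    (hQinv : Q⁻¹ = Matrix.fromBlocks X M Mᵀ Xtilde)
    (hM : IsUnit M)
    (Pi1 : Matrix ((Fin p) ⊕ (Fin p)) ((Fin p) ⊕ (Fin p)) ℝ)
    (hPi1 : Pi1 = Matrix.fromBlocks X 1 Mᵀ 0)
    (A : Matrix ((Fin p) ⊕ (Fin p)) ((Fin p) ⊕ (Fin p)) ℝ)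
    (B : Matrix ((Fin p) ⊕ (Fin p)) (Fin m) ℝ)
    (R : Matrix (Fin m) (Fin m) ℝ) (ubar : Fin m → ℝ) (hR : R.PosDef)
    (Ξp : Matrix (Fin p) (Fin p) ℝ) (hΞp : Ξp.PosDef) (ξbarp : Fin p → ℝ)
    (Ξ : Matrix ((Fin p) ⊕ (Fin p)) ((Fin p) ⊕ (Fin p)) ℝ)
    (hΞ : Ξ = Matrix.fromBlocks Ξp 0 0 0)
    (ξbar : ((Fin p) ⊕ (Fin p)) → ℝ) (hξ : ξbar = Sum.elim ξbarp 0)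
    (G : Matrix ((Fin p) ⊕ (Fin p)) ((Fin p) ⊕ (Fin p)) ℝ)
    (hG : G = Matrix.fromBlocks ((2 : ℝ) • X - Ξp⁻¹) (X * Ξp) (Ξp * X) Ξp)
    (E F S T E' F' T' : Matrix (((Fin p) ⊕ (Fin p)) ⊕ ((Fin 1) ⊕ (Fin m)))
        (((Fin p) ⊕ (Fin p)) ⊕ ((Fin 1) ⊕ (Fin m))) ℝ)
    (hE : E = blk3 (Aᵀ * Q + Q * A) 0 (Q * B)
                   0 0 0
                   (Bᵀ * Q) 0 0)
    (hF : F = blk3 Q 0 0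
                   0 (sc (-1)) 0
                   0 0 0)
    (hS : S = blk3 0 0 0
                   0 (sc (1 - ubar ⬝ᵥ (R *ᵥ ubar))) (rowV (ubar ᵥ* R))
                   0 (colV (R *ᵥ ubar)) (-R))
    (hT : T = blk3 (-Ξ) (colV (Ξ *ᵥ ξbar)) 0
                   (rowV (ξbar ᵥ* Ξ)) (sc (1 - ξbar ⬝ᵥ (Ξ *ᵥ ξbar))) 0
                   0 0 0)
    (hE' : E' = blk3 (Pi1ᵀ * (Aᵀ * Q + Q * A) * Pi1) 0 (Pi1ᵀ * (Q * B))
                     0 0 0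
                     (Bᵀ * Q * Pi1) 0 0)
    (hF' : F' = blk3 (Pi1ᵀ * Q * Pi1) 0 0
                     0 (sc (-1)) 0
                     0 0 0)
    (hT' : T' = blk3 (-G) (colV (Pi1ᵀ *ᵥ (Ξ *ᵥ ξbar))) 0
                     (rowV ((ξbar ᵥ* Ξ) ᵥ* Pi1)) (sc (1 - ξbar ⬝ᵥ (Ξ *ᵥ ξbar))) 0
                     0 0 0)
    (α β lam : ℝ) (hα : 0 ≤ α) (hβ : 0 ≤ β) (hlam : 0 ≤ lam)
    (hLMI' : (-E' - α • F' - β • S - lam • T').PosSemidef) :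
    (-E - α • F - β • S - lam • T).PosSemidef :=
  primed_LMI_implies_original_general X M Xtilde Q hQpd hQinv hM Pi1 hPi1 A B R ubar Ξp hΞp Ξ hΞ
    ξbar G hG E F S T E' F' T' hE hF hS hT hE' hF' hT' α β lam hlam hLMI'
end
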